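/- Fix d ≥ 1, σ > 0, γ > 0 and a unit vector u ∈ ℝ^d. Then the function s ↦ R(s·u) is continuous on (0, ∞), where R(μ) is the normalized uniform surface measure of {(p, t) ∈ S^d : p ≠ 0, E_{μ,σ}(p, t) ≤ γ}. -/

import Mathlib

open Classical MeasureTheory ProbabilityTheory

/-- `Φ`, the standard Gaussian cumulative distribution function. -/
noncomputable def Phi (x : ℝ) : ℝ := ((gaussianReal 0 1) (Set.Iic x)).toReal

/-- Euclidean dot product on `ℝ^d`. -/
noncomputable def dotp {d : ℕ} (a b : Fin d → ℝ) : ℝ := ∑ i, a i * b i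

/-- Euclidean norm of a vector in `ℝ^d`. -/
noncomputable def eucNorm {d : ℕ} (x : Fin d → ℝ) : ℝ := Real.sqrt (∑ i, (x i) ^ 2)

/-- `E_{μ,σ}(p, t)`: reducible error of the affine classifier with parameters `(p, t)` for
the antipodal equal-prior mixture of `N_d(−μ, σ²I)` and `N_d(μ, σ²I)`. -/
noncomputable def redErrMD (d : ℕ) (μ : Fin d → ℝ) (σ : ℝ) (p : Fin d → ℝ) (t : ℝ) : ℝ :=
  Phi (eucNorm μ / σ) - (1 / 2) * Phi ((|dotp p μ| - t) / (σ * eucNorm p))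
    - (1 / 2) * Phi ((t + |dotp p μ|) / (σ * eucNorm p))

/-- The (non-normalized) uniform surface measure on the unit sphere
`S^d ⊂ ℝ^{d+1}`. -/
noncomputable def sphereMeasure (d : ℕ) :
    Measure (Metric.sphere (0 : EuclideanSpace ℝ (Fin (d + 1))) 1) :=
  (volume : Measure (EuclideanSpace ℝ (Fin (d + 1)))).toSphere

/-- First `d` coordinates `p` of a point of `ℝ^{d+1}`. -/
noncomputable def pPart (d : ℕ) (x : EuclideanSpace ℝ (Fin (d + 1))) : Fin d → ℝ :=
  fun i => x i.castSucc

/-- Last coordinate `t` of a point of `ℝ^{d+1}`. -/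
noncomputable def tPart (d : ℕ) (x : EuclideanSpace ℝ (Fin (d + 1))) : ℝ :=
  x (Fin.last d)

/-- The multidimensional Rashomon ratio `R(μ)`: the normalized uniform surface measure of
`{(p, t) ∈ S^d : p ≠ 0, E_{μ,σ}(p, t) ≤ γ}`. -/
noncomputable def rashRatioMD (d : ℕ) (σ γ : ℝ) (μ : Fin d → ℝ) : ℝ :=
  (sphereMeasure d {x | pPart d x.val ≠ 0 ∧
      redErrMD d μ σ (pPart d x.val) (tPart d x.val) ≤ γ}).toReal
    / (sphereMeasure d Set.univ).toReal

/-!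
For fixed `(p, t)` the error `E_{s·u,σ}(p, t)` is continuous in `s`, so by dominated convergence
`s ↦ R(s·u)` is continuous at every `s₀` for which the level set `{E_{s₀·u,σ} = γ}` is null on
the sphere. Since `E` is invariant under positive rescaling of `(p, t)`, this follows once the cone
over that level set is Lebesgue-null in `ℝ^{d+1}`. By Fubini it suffices to look at slices with
`p·μ ≠ 0` (the hyperplane `p·μ = 0` is null), and there `t ↦ E(p, t)` is even and strictly
increasing in `|t|` because the Gaussian density decreases away from `0`: each slice has at most
two points.
-/

open Set Filter

lemma Phi_eq_integral (x : ℝ) : Phi x = ∫ t in Iic x, gaussianPDFReal 0 1 t := by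
  rw [Phi, gaussianReal_apply_eq_integral 0 one_ne_zero,
    ENNReal.toReal_ofReal (setIntegral_nonneg measurableSet_Iic
      fun t _ => gaussianPDFReal_nonneg 0 1 t)]

lemma hasDerivAt_Phi (x : ℝ) : HasDerivAt Phi (gaussianPDFReal 0 1 x) x := by
  have hcont : Continuous (gaussianPDFReal 0 1) := by
    unfold gaussianPDFReal; fun_prop
  have hint (y : ℝ) : IntegrableOn (gaussianPDFReal 0 1) (Iic y) :=
    (integrable_gaussianPDFReal 0 1).integrableOn
  have hPhi : Phi = fun y => Phi 0 + ∫ t in (0 : ℝ)..y, gaussianPDFReal 0 1 t := by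
    ext y
    rw [Phi_eq_integral, Phi_eq_integral,
      ← intervalIntegral.integral_Iic_sub_Iic (hint 0) (hint y)]
    ring
  rw [hPhi]
  exact (intervalIntegral.integral_hasDerivAt_right (hcont.intervalIntegrable _ _)
    (hcont.stronglyMeasurableAtFilter _ _) hcont.continuousAt).const_add _

@[fun_prop]
lemma continuous_Phi : Continuous Phi :=
  continuous_iff_continuousAt.2 fun x => (hasDerivAt_Phi x).continuousAt

lemma gaussianPDFReal_lt_of_sq_lt {μ : ℝ} {v : NNReal} (hv : v ≠ 0) {x y : ℝ}
    (h : (y - μ) ^ 2 < (x - μ) ^ 2) : gaussianPDFReal μ v x < gaussianPDFReal μ v y := by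
  have hv' : (0 : ℝ) < v := by positivity
  rw [gaussianPDFReal, gaussianPDFReal]
  gcongr

lemma countable_setOf_eq_of_even_of_strictAntiOn {g : ℝ → ℝ} (heven : ∀ t, g (-t) = g t)
    (hanti : StrictAntiOn g (Ici 0)) (v : ℝ) : {t | g t = v}.Countable := by
  set S := {t | g t = v} ∩ Ici 0
  have hS : S.Subsingleton := fun t₁ h₁ t₂ h₂ => hanti.injOn h₁.2 h₂.2 (h₁.1.trans h₂.1.symm)
  refine (hS.countable.union (hS.countable.image Neg.neg)).mono fun t ht => ?_
  rcases le_total 0 t with h | h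
  · exact Or.inl ⟨ht, h⟩
  · exact Or.inr ⟨-t, ⟨(heven t).trans ht, neg_nonneg.2 h⟩, neg_neg t⟩

lemma volume_setOf_dotProduct_eq_zero {ι : Type*} [Fintype ι] {μ : ι → ℝ} (hμ : μ ≠ 0) :
    volume {p : ι → ℝ | p ⬝ᵥ μ = 0} = 0 := by
  have hker : LinearMap.ker (dotProductBilin ℝ ℝ μ) ≠ ⊤ := fun h => by
    have hmem : μ ∈ LinearMap.ker (dotProductBilin ℝ ℝ μ) := h ▸ Submodule.mem_top
    exact hμ (by simpa using hmem)
  have hset : {p : ι → ℝ | p ⬝ᵥ μ = 0} = LinearMap.ker (dotProductBilin ℝ ℝ μ) := by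
    ext p
    simp [dotProduct_comm p μ]
  rw [hset]
  exact Measure.addHaar_submodule _ _ hker

lemma MeasureTheory.Measure.toSphere_preimage_eq_zero {E : Type*} [NormedAddCommGroup E]
    [NormedSpace ℝ E] [MeasurableSpace E] [BorelSpace E] (μ : Measure E) {Z : Set E}
    (hZ : MeasurableSet Z)     (hcone : ∀ c : ℝ, 0 < c → ∀ z ∈ Z, c • z ∈ Z) (hnull : μ Z = 0) :
    μ.toSphere (Subtype.val ⁻¹' Z) = 0 := by
  rw [μ.toSphere_apply' (measurable_subtype_coe hZ)]
  refine mul_eq_zero_of_right _ (measure_mono_null ?_ hnull)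
  rintro _ ⟨c, hc, _, ⟨z, hz, rfl⟩, rfl⟩
  exact hcone c hc.1 z hz

lemma continuousAt_measure_setOf_and_le {α X : Type*} [MeasurableSpace α] [TopologicalSpace X]
    [FirstCountableTopology X] (ν : Measure α) [IsFiniteMeasure ν] {P : α → Prop}
    (hP : MeasurableSet {a | P a}) {f : X → α → ℝ} (hf : ∀ x, Measurable (f x)) {x₀ : X}
    (hcont : ∀ a, ContinuousAt (fun x => f x a) x₀) {γ : ℝ}
    (hnull : ν {a | P a ∧ f x₀ a = γ} = 0) :
    ContinuousAt (fun x => (ν {a | P a ∧ f x a ≤ γ}).toReal) x₀ := by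
  have hmeas (x : X) : MeasurableSet {a | P a ∧ f x a ≤ γ} :=
    hP.inter (hf x measurableSet_Iic)
  refine (ENNReal.tendsto_toReal (measure_ne_top ν _)).comp <|
    tendsto_measure_of_ae_tendsto_indicator_of_isFiniteMeasure _ (hmeas x₀) hmeas ?_
  filter_upwards [measure_eq_zero_iff_ae_notMem.1 hnull] with a ha
  by_cases hPa : P a
  · rcases lt_or_gt_of_ne fun h => ha ⟨hPa, h⟩ with hlt | hgt
    · filter_upwards [(hcont a).eventually_lt_const hlt] with x hx
      simp [hPa, hx.le, hlt.le]
    · filter_upwards [(hcont a).eventually_const_lt hgt] with x hx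
      simp [hPa, not_le.2 hx, not_le.2 hgt]
  · exact Eventually.of_forall fun x => by simp [hPa]

/-- Up to the constant `½`, the part of `E_{μ,σ}(p, t)` that depends on the threshold `t`,
with `b = |p·μ|` and `c = σ‖p‖`. -/
noncomputable def phiWindow (b c t : ℝ) : ℝ := Phi ((b - t) / c) + Phi ((t + b) / c)

lemma phiWindow_neg (b c t : ℝ) : phiWindow b c (-t) = phiWindow b c t := by
  rw [phiWindow, phiWindow, add_comm]
  ring_nf

lemma strictAntiOn_phiWindow {b c : ℝ} (hb : 0 < b) (hc : 0 < c) :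
    StrictAntiOn (phiWindow b c) (Ici 0) := by
  have hderiv (t : ℝ) : HasDerivAt (phiWindow b c)
      (gaussianPDFReal 0 1 ((b - t) / c) * (-1 / c) +
        gaussianPDFReal 0 1 ((t + b) / c) * (1 / c)) t :=
    ((hasDerivAt_Phi _).comp t (((hasDerivAt_id t).const_sub b).div_const c)).add
      ((hasDerivAt_Phi _).comp t (((hasDerivAt_id t).add_const b).div_const c))
  refine strictAntiOn_of_deriv_neg (convex_Ici 0)
    (fun t _ => (hderiv t).continuousAt.continuousWithinAt) fun t ht => ?_
  rw [interior_Ici, mem_Ioi] at ht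
  have hlt : gaussianPDFReal 0 1 ((t + b) / c) < gaussianPDFReal 0 1 ((b - t) / c) := by
    apply gaussianPDFReal_lt_of_sq_lt one_ne_zero
    rw [sub_zero, sub_zero, div_pow, div_pow]
    exact div_lt_div_of_pos_right (by nlinarith) (by positivity)
  rw [(hderiv t).deriv, show ∀ x y : ℝ, x * (-1 / c) + y * (1 / c) = (y - x) / c by
    intros; ring]
  exact div_neg_of_neg_of_pos (by linarith) hc

section Vectors

variable {d : ℕ}

lemma dotp_eq_dotProduct (p x : Fin d → ℝ) : dotp p x = p ⬝ᵥ x := rfl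

lemma eucNorm_eq_norm (x : Fin d → ℝ) : eucNorm x = ‖WithLp.toLp 2 x‖ := by
  simp [eucNorm, EuclideanSpace.norm_eq]

lemma eucNorm_smul (c : ℝ) (x : Fin d → ℝ) : eucNorm (c • x) = |c| * eucNorm x := by
  rw [eucNorm_eq_norm, eucNorm_eq_norm, WithLp.toLp_smul, norm_smul, Real.norm_eq_abs]

lemma eucNorm_pos {x : Fin d → ℝ} (hx : x ≠ 0) : 0 < eucNorm x := by
  rw [eucNorm_eq_norm, norm_pos_iff]
  exact fun h => hx (WithLp.toLp_injective 2 (h.trans (WithLp.toLp_zero 2).symm))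

lemma ne_zero_of_eucNorm_eq_one {x : Fin d → ℝ} (hx : eucNorm x = 1) : x ≠ 0 := by
  rintro rfl
  simp [eucNorm] at hx

@[fun_prop]
lemma continuous_eucNorm : Continuous (eucNorm (d := d)) := by
  unfold eucNorm; fun_prop

@[fun_prop]
lemma continuous_dotp : Continuous fun q : (Fin d → ℝ) × (Fin d → ℝ) => dotp q.1 q.2 := by
  unfold dotp; fun_prop

end Vectors

lemma redErrMD_eq_sub_phiWindow (d : ℕ) (μ : Fin d → ℝ) (σ : ℝ) (p : Fin d → ℝ) (t : ℝ) :
    redErrMD d μ σ p t =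
      Phi (eucNorm μ / σ) - phiWindow |dotp p μ| (σ * eucNorm p) t / 2 := by
  rw [redErrMD, phiWindow]
  ring

lemma redErrMD_smul_smul (d : ℕ) (μ : Fin d → ℝ) (σ : ℝ) (p : Fin d → ℝ) (t : ℝ) {c : ℝ}
    (hc : 0 < c) : redErrMD d μ σ (c • p) (c * t) = redErrMD d μ σ p t := by
  simp only [redErrMD_eq_sub_phiWindow, phiWindow, dotp_eq_dotProduct, smul_dotProduct,
    smul_eq_mul, eucNorm_smul, abs_mul, abs_of_pos hc]
  congr 4 <;> field_simp

lemma continuous_redErrMD_smul (d : ℕ) (σ : ℝ) (u p : Fin d → ℝ) (t : ℝ) :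
    Continuous fun s : ℝ => redErrMD d (s • u) σ p t := by
  unfold redErrMD; fun_prop

lemma measurable_redErrMD (d : ℕ) (μ : Fin d → ℝ) (σ : ℝ) :
    Measurable fun q : (Fin d → ℝ) × ℝ => redErrMD d μ σ q.1 q.2 := by
  unfold redErrMD; fun_prop

lemma measurePreserving_pPart_tPart (d : ℕ) :
    MeasurePreserving (fun y : EuclideanSpace ℝ (Fin (d + 1)) => (pPart d y, tPart d y)) := by
  have hpi (n : ℕ) : Measure.pi (fun _ : Fin n => (volume : Measure ℝ)) = volume := volume_pi.symm
  have hsplit := measurePreserving_piFinSuccAbove (fun _ : Fin (d + 1) => (volume : Measure ℝ))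
    (Fin.last d)
  rw [hpi, hpi] at hsplit
  convert (Measure.measurePreserving_swap.comp hsplit).comp
    (EuclideanSpace.volume_preserving_symm_measurableEquiv_toLp (Fin (d + 1))) using 1
  · ext y
    · simp [pPart, MeasurableEquiv.piFinSuccAbove, Fin.init]
    · rfl
  · rfl

lemma countable_setOf_redErrMD_eq {d : ℕ} {μ : Fin d → ℝ} {σ : ℝ} (hσ : 0 < σ)
    {p : Fin d → ℝ} (hp : dotp p μ ≠ 0) (γ : ℝ) :
    {t | redErrMD d μ σ p t = γ}.Countable := by
  have hp0 : p ≠ 0 := by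
    rintro rfl
    simp [dotp] at hp
  refine (countable_setOf_eq_of_even_of_strictAntiOn (phiWindow_neg _ _)
    (strictAntiOn_phiWindow (abs_pos.2 hp) (mul_pos hσ (eucNorm_pos hp0)))
    (2 * (Phi (eucNorm μ / σ) - γ))).mono fun t ht => ?_
  simp only [mem_ofPred_eq, redErrMD_eq_sub_phiWindow] at ht ⊢
  linarith

lemma measurableSet_setOf_redErrMD_eq (d : ℕ) (μ : Fin d → ℝ) (σ γ : ℝ) :
    MeasurableSet {q : (Fin d → ℝ) × ℝ | q.1 ≠ 0 ∧ redErrMD d μ σ q.1 q.2 = γ} :=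
  (measurable_fst (measurableSet_singleton 0).compl).inter
    (measurable_redErrMD d μ σ (measurableSet_singleton γ))

lemma volume_setOf_redErrMD_eq {d : ℕ} {μ : Fin d → ℝ} (hμ : μ ≠ 0) {σ : ℝ} (hσ : 0 < σ)
    (γ : ℝ) : volume {q : (Fin d → ℝ) × ℝ | q.1 ≠ 0 ∧ redErrMD d μ σ q.1 q.2 = γ} = 0 := by
  rw [Measure.volume_eq_prod,
    Measure.measure_prod_null (measurableSet_setOf_redErrMD_eq d μ σ γ)]
  have hae : ∀ᵐ p : Fin d → ℝ, dotp p μ ≠ 0 :=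
    measure_eq_zero_iff_ae_notMem.1 (volume_setOf_dotProduct_eq_zero hμ)
  filter_upwards [hae] with p hp
  exact measure_mono_null (fun t ht => ht.2) ((countable_setOf_redErrMD_eq hσ hp γ).measure_zero _)

lemma sphereMeasure_setOf_redErrMD_eq {d : ℕ} {μ : Fin d → ℝ} (hμ : μ ≠ 0) {σ : ℝ}
    (hσ : 0 < σ) (γ : ℝ) :
    sphereMeasure d {x | pPart d x.val ≠ 0 ∧
      redErrMD d μ σ (pPart d x.val) (tPart d x.val) = γ} = 0 := by
  have hpt := measurePreserving_pPart_tPart d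
  have hmeas := measurableSet_setOf_redErrMD_eq d μ σ γ
  refine Measure.toSphere_preimage_eq_zero _ (hpt.measurable hmeas) ?_
    ((hpt.measure_preimage hmeas.nullMeasurableSet).trans (volume_setOf_redErrMD_eq hμ hσ γ))
  rintro c hc y ⟨hp, hE⟩
  exact ⟨smul_ne_zero hc.ne' hp, (redErrMD_smul_smul d μ σ _ _ hc).trans hE⟩

theorem rashRatioMD_continuousOn_general
    (d : ℕ) (σ γ : ℝ) (hσ : 0 < σ)
    (u : Fin d → ℝ) (hu : eucNorm u = 1) :
    ContinuousOn (fun s : ℝ => rashRatioMD d σ γ (s • u)) (Set.Ioi (0 : ℝ)) := by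
  have : IsFiniteMeasure (sphereMeasure d) := by unfold sphereMeasure; infer_instance
  have hpt : Measurable fun x : Metric.sphere (0 : EuclideanSpace ℝ (Fin (d + 1))) 1 =>
      (pPart d x.val, tPart d x.val) :=
    (measurePreserving_pPart_tPart d).measurable.comp measurable_subtype_coe
  intro s hs
  have hcont : ContinuousAt (fun s : ℝ => (sphereMeasure d {x | pPart d x.val ≠ 0 ∧
      redErrMD d (s • u) σ (pPart d x.val) (tPart d x.val) ≤ γ}).toReal) s :=
    continuousAt_measure_setOf_and_le _ (measurable_fst.comp hpt (measurableSet_singleton 0).compl)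
      (fun s => (measurable_redErrMD d (s • u) σ).comp hpt)
      (fun x => (continuous_redErrMD_smul d σ u _ _).continuousAt)
      (sphereMeasure_setOf_redErrMD_eq (smul_ne_zero (ne_of_gt hs) (ne_zero_of_eucNorm_eq_one hu))
        hσ γ)
  exact (hcont.div_const _).continuousWithinAt

/-- Along a ray `μ = s·u` with `u` a unit vector, the multidimensional
Rashomon ratio `s ↦ R(s·u)` is continuous on `(0, ∞)`. -/
theorem rashRatioMD_continuousOn
    (d : ℕ) (hd : 1 ≤ d) (σ γ : ℝ) (hσ : 0 < σ) (hγ : 0 < γ)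
    (u : Fin d → ℝ) (hu : eucNorm u = 1) :
    ContinuousOn (fun s : ℝ => rashRatioMD d σ γ (s • u)) (Set.Ioi (0 : ℝ)) :=
  rashRatioMD_continuousOn_general d σ γ hσ u hu
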